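/- arXiv:2305.08498 — 3 statements merged into one kernel-verified Lean document; each statement's English description precedes it below -/
import Mathlib

section
/- Let a, b be real numbers with 1 ≤ a < 2 and −1 < b < 1 − a. Then there exists ε ∈ (0, 1) such that (b² − 1)/2 + ε < 0 and ((b² − 1)/2 + ε)·((b²·(1 + ε) + ε − 1)/2) − (a²/4)·(b + 1 − ε)² > 0. -/
theorem exists_eps_R3 (a b : ℝ)
    (ha1 : 1 ≤ a) (ha2 : a < 2) (hb1 : -1 < b) (hb2 : b < 1 - a) :
    ∃ ε : ℝ, 0 < ε ∧ ε < 1 ∧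
      (b ^ 2 - 1) / 2 + ε < 0 ∧
      ((b ^ 2 - 1) / 2 + ε) * ((b ^ 2 * (1 + ε) + ε - 1) / 2)
        - a ^ 2 / 4 * (b + 1 - ε) ^ 2 > 0 := by
  have hb0 : b < 0 := by linarith
  have hbp : 0 < 1 + b := by linarith
  have hbp1 : 1 + b < 1 := by linarith
  have hmb : 1 - b < 2 := by linarith
  have hmb0 : 0 < 1 - b := by linarith
  have hc : 0 < (1 - b) ^ 2 - a ^ 2 := by nlinarith
  have hc3 : (1 - b) ^ 2 - a ^ 2 < 3 := by nlinarith
  obtain ⟨t, ht⟩ : ∃ t : ℝ, t = (1 + b) ^ 2 * ((1 - b) ^ 2 - a ^ 2) / 64 := ⟨_, rfl⟩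
  have hsq : (1 + b) ^ 2 < 1 := by nlinarith
  have ht0 : 0 < t := by rw [ht]; positivity
  have hprod : (1 + b) ^ 2 * ((1 - b) ^ 2 - a ^ 2) < 3 := by nlinarith
  have ht1 : t < 1 := by rw [ht]; linarith
  refine ⟨t, ht0, ht1, ?_, ?_⟩
  · -- t < (1 - b^2)/2
    have h1 : t < (1 + b) * (1 - b) / 2 := by
      rw [ht]
      nlinarith [mul_pos hbp hmb0, mul_pos (mul_pos hbp hmb0) (mul_pos hbp hmb0)]
    nlinarith
  · have hb2lt : b ^ 2 < 1 := by nlinarith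
    have hb4 : 0 ≤ b ^ 4 := by positivity
    have ha2b : 0 ≤ a ^ 2 * (b + 1) := mul_nonneg (sq_nonneg a) (by linarith : (0:ℝ) ≤ b + 1)
    have hL : ((b ^ 4 - 1) / 4 + (b ^ 2 - 1) / 2 + a ^ 2 * (b + 1) / 2) ≥ -3 / 4 := by
      have : 0 ≤ b ^ 2 := sq_nonneg b
      linarith
    have hQ : ((b ^ 2 + 1) / 2 - a ^ 2 / 4) ≥ -1 := by nlinarith
    have h16 : (1 + b) ^ 2 * ((1 - b) ^ 2 - a ^ 2) = 64 * t := by rw [ht]; ring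
    have key : ((b ^ 2 - 1) / 2 + t) * ((b ^ 2 * (1 + t) + t - 1) / 2)
        - a ^ 2 / 4 * (b + 1 - t) ^ 2
        = 16 * t + t * ((b ^ 4 - 1) / 4 + (b ^ 2 - 1) / 2 + a ^ 2 * (b + 1) / 2)
          + t ^ 2 * ((b ^ 2 + 1) / 2 - a ^ 2 / 4) := by
      linear_combination (1 / 4) * h16
    have h1 : t * ((b ^ 4 - 1) / 4 + (b ^ 2 - 1) / 2 + a ^ 2 * (b + 1) / 2) ≥ t * (-3 / 4) :=
      mul_le_mul_of_nonneg_left hL ht0.le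
    have h2 : t ^ 2 * ((b ^ 2 + 1) / 2 - a ^ 2 / 4) ≥ t ^ 2 * (-1) :=
      mul_le_mul_of_nonneg_left hQ (by positivity)
    have h3 : t ^ 2 < t := by rw [sq]; exact mul_lt_of_lt_one_right ht0 ht1
    rw [key]; linarith
end

section
/- Let a, b, λ be real with λ > 0, −λ < a < 0, a + b < 0, b > 0, and let k⋆ ∈ ℕ satisfy (a+b)·k⋆ + λ ≤ 0. If m, m' ∈ ℕ satisfy m ≥ k⋆ and a·m + b·m' + λ > 0, then m' > (−a·k⋆ − λ)/b ≥ k⋆. Consequently, any finite sequence m₁, …, m_q of naturals with m_q ≥ k⋆ and a·m_{i+1} + b·m_i + λ > 0 for all i satisfies m₁ ≥ k⋆, and hence a·m₁ + λ ≤ 0. -/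
theorem inaccessible_induction (a b lam : ℝ) (hlam : 0 < lam) (ha1 : -lam < a)
    (ha2 : a < 0) (hab : a + b < 0) (hb : 0 < b) (kstar : ℕ)
    (hk : (a + b) * kstar + lam ≤ 0) :
    (∀ m m' : ℕ, (kstar : ℝ) ≤ (m : ℝ) → a * m + b * m' + lam > 0 →
      (m' : ℝ) > (-a * kstar - lam) / b ∧ (-a * kstar - lam) / b ≥ (kstar : ℝ)) ∧
    (∀ (q : ℕ) (m : ℕ → ℕ), (kstar : ℝ) ≤ (m q : ℝ) →
      (∀ i < q, a * m (i + 1) + b * m i + lam > 0) →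
      (kstar : ℝ) ≤ (m 0 : ℝ) ∧ a * m 0 + lam ≤ 0) := by
  constructor
  · intro m m' hm h
    have h1 : -a * kstar - lam < b * m' := by nlinarith
    have h2 : b * kstar ≤ -a * kstar - lam := by nlinarith
    constructor
    · rw [gt_iff_lt, div_lt_iff₀ hb]
      linarith
    · rw [ge_iff_le, le_div_iff₀ hb]
      linarith
  · intro q m hq htrans
    have key : ∀ j, j ≤ q → (kstar : ℝ) ≤ (m (q - j) : ℝ) := by
      intro j
      induction j with
      | zero => intro _; simpa using hq
      | succ j ih =>
        intro hjq
        have hprev := ih (by omega)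
        have hstep := htrans (q - (j + 1)) (by omega)
        have heq : q - (j + 1) + 1 = q - j := by omega
        rw [heq] at hstep
        nlinarith [hprev, hstep]
    have h0 : (kstar : ℝ) ≤ (m 0 : ℝ) := by simpa using key q le_rfl
    exact ⟨h0, by nlinarith⟩
end

section
/- Let a, b, λ, ε be real numbers with λ > 0, b < 0, and let θ > 0, ε ∈ (0, θ). For natural numbers i, j ≥ 1 with |i/j − θ| ≤ ε, the quantity E = (a·i + b·j + λ)/i satisfies |E − θ| < |b|·ε/(θ·(θ − ε)) + λ/i, provided a + b/θ = θ (i.e. θ is a root of X² − aX − b). -/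
/-!
Since `a - θ = -b/θ`, the error splits as `E - θ = |b| (θ⁻¹ - r⁻¹) + λ/i` with `r = i/j`. As `r`
ranges over `[θ - ε, θ + ε]`, the first term lies in `[-|b|ε/(θ(θ-ε)), |b|ε/(θ(θ+ε))]`, whose
upper end is strictly below `|b|ε/(θ(θ-ε))`; adding the positive `λ/i` gives the strict bound.
-/

lemma inv_sub_inv_mem_Icc_of_abs_sub_le {θ ε r : ℝ} (hεθ : ε < θ) (hr : |r - θ| ≤ ε) :
    -(ε / (θ * (θ - ε))) ≤ θ⁻¹ - r⁻¹ ∧ θ⁻¹ - r⁻¹ ≤ ε / (θ * (θ + ε)) := by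
  obtain ⟨hlo, hhi⟩ := abs_le.mp hr
  have hε : 0 ≤ ε := (abs_nonneg _).trans hr
  have hθε : 0 < θ - ε := sub_pos.mpr hεθ
  have hθ : 0 < θ := by linarith
  constructor
  · calc -(ε / (θ * (θ - ε))) = θ⁻¹ - (θ - ε)⁻¹ := by field_simp; ring
      _ ≤ θ⁻¹ - r⁻¹ := sub_le_sub_left (inv_anti₀ hθε (by linarith)) _
  · calc θ⁻¹ - r⁻¹ ≤ θ⁻¹ - (θ + ε)⁻¹ := sub_le_sub_left (inv_anti₀ (by linarith) (by linarith)) _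
      _ = ε / (θ * (θ + ε)) := by field_simp; ring

lemma abs_add_lt_add_of_mem_Ico {x y B : ℝ} (hlo : -B ≤ x) (hhi : x < B) (hy : 0 < y) :
    |x + y| < B + y :=
  abs_lt.mpr ⟨by linarith, by linarith⟩

theorem mean_ratio_close_general (a b lam θ ε : ℝ) (hlam : 0 < lam) (hb : b < 0)
    (hε0 : 0 < ε) (hεθ : ε < θ)
    (hroot : a + b / θ = θ) (i j : ℕ)
    (hij : |(i : ℝ) / (j : ℝ) - θ| ≤ ε) :
    |(a * i + b * j + lam) / i - θ| < |b| * ε / (θ * (θ - ε)) + lam / i := by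
  set r : ℝ := i / j
  have hr : 0 < r := by linarith [(abs_le.mp hij).1]
  have hi : (0 : ℝ) < i := Nat.cast_pos.mpr (Nat.pos_of_ne_zero fun h => by simp [r, h] at hr)
  have hθ : 0 < θ := hε0.trans hεθ
  have hsplit : (a * i + b * j + lam) / i - θ = |b| * (θ⁻¹ - r⁻¹) + lam / i := by
    rw [abs_of_neg hb, inv_div, eq_sub_of_add_eq hroot]
    field_simp
    ring
  obtain ⟨hlo, hhi⟩ := inv_sub_inv_mem_Icc_of_abs_sub_le hεθ hij
  have hgap : ε / (θ * (θ + ε)) < ε / (θ * (θ - ε)) := by gcongr; nlinarith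
  rw [hsplit, mul_div_assoc]
  refine abs_add_lt_add_of_mem_Ico ?_ ?_ (div_pos hlam hi)
  · simpa only [mul_neg] using mul_le_mul_of_nonneg_left hlo (abs_nonneg b)
  · exact (mul_le_mul_of_nonneg_left hhi (abs_nonneg b)).trans_lt
      (mul_lt_mul_of_pos_left hgap (abs_pos.mpr hb.ne))

theorem mean_ratio_close (a b lam θ ε : ℝ) (hlam : 0 < lam) (hb : b < 0)
    (hθ : 0 < θ) (hε0 : 0 < ε) (hεθ : ε < θ)
    (hroot : a + b / θ = θ) (i j : ℕ) (hi : 1 ≤ i) (hj : 1 ≤ j)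
    (hij : |(i : ℝ) / (j : ℝ) - θ| ≤ ε) :
    |(a * i + b * j + lam) / i - θ| < |b| * ε / (θ * (θ - ε)) + lam / i :=
  mean_ratio_close_general a b lam θ ε hlam hb hε0 hεθ hroot i j hij
end
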